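/- Let f : ℝ⁶ × ℝ² → ℝ⁶ be the slider dynamics f((x₁,…,x₆),(u₁,u₂)) = (x₂, u₁ cos(x₅), x₄, u₁ sin(x₅), x₆, u₂). Let ε ≠ 0 and let B ⊂ ℝ⁶ be a ball centered at 0 ∈ ℝ⁶ of radius strictly less than π/2. Then the point (0, 0, 0, ε, 0, 0) ∈ ℝ⁶ does not belong to the image f(B × ℝ²). In particular, f(𝒩) is not a neighborhood of 0 ∈ ℝ⁶ for 𝒩 = B × ℝ², so the slider does not satisfy the Brockett necessary condition for stabilizability by continuous state feedback. -/

import Mathlib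

open Set Filter

/-- The slider dynamics
`f((x₁,…,x₆),(u₁,u₂)) = (x₂, u₁cos x₅, x₄, u₁sin x₅, x₆, u₂)`. -/
noncomputable def fSli (p : EuclideanSpace ℝ (Fin 6) × (ℝ × ℝ)) :
    EuclideanSpace ℝ (Fin 6) :=
  WithLp.toLp 2 ![p.1 1, p.2.1 * Real.cos (p.1 4), p.1 3, p.2.1 * Real.sin (p.1 4), p.1 5, p.2.2]

/-!
The velocity `(ẋ₂, ẋ₄) = u₁ (cos x₅, sin x₅)` always points along the heading `x₅`.
On a ball of radius `< π/2` the heading satisfies `cos x₅ > 0`, so `ẋ₂ = 0` forces `u₁ = 0`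
and hence `ẋ₄ = 0`: no point `(0, 0, 0, ε, 0, 0)` with `ε ≠ 0` is reached. Such points
accumulate at the origin, so the image of `B × ℝ²` is not a neighbourhood of `0`.
-/

open Real Topology

lemma cos_pos_of_mem_ball {n : ℕ} {ρ : ℝ} (hρ : ρ ≤ π / 2) {x : EuclideanSpace ℝ (Fin n)}
    (hx : x ∈ Metric.ball 0 ρ) (i : Fin n) : 0 < cos (x i) := by
  have hxi : |x i| < π / 2 := calc
    |x i| = ‖x i‖ := (norm_eq_abs _).symm
    _ ≤ ‖x‖ := PiLp.norm_apply_le x i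
    _ < ρ := mem_ball_zero_iff.mp hx
    _ ≤ π / 2 := hρ
  exact cos_pos_of_mem_Ioo (abs_lt.mp hxi)

lemma fSli_apply_three_eq_zero {p : EuclideanSpace ℝ (Fin 6) × (ℝ × ℝ)}
    (hcos : cos (p.1 4) ≠ 0) (h : fSli p 1 = 0) : fSli p 3 = 0 := by
  change p.2.1 * cos (p.1 4) = 0 at h
  change p.2.1 * sin (p.1 4) = 0
  rw [(mul_eq_zero.mp h).resolve_right hcos, zero_mul]

lemma toLp_notMem_fSli_image_ball {ε ρ : ℝ} (hε : ε ≠ 0) (hρ : ρ ≤ π / 2) :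
    (WithLp.toLp 2 ![0, 0, 0, ε, 0, 0] : EuclideanSpace ℝ (Fin 6)) ∉
      fSli '' (Metric.ball 0 ρ ×ˢ univ) := by
  rintro ⟨p, ⟨hp, -⟩, hfp⟩
  have hcos : cos (p.1 4) ≠ 0 := (cos_pos_of_mem_ball hρ hp 4).ne'
  have h1 : fSli p 1 = 0 := by rw [hfp]; rfl
  exact hε (by simpa [hfp] using fSli_apply_three_eq_zero hcos h1)

lemma tendsto_toLp_nhdsNE_zero :
    Tendsto (fun ε : ℝ ↦ (WithLp.toLp 2 ![0, 0, 0, ε, 0, 0] : EuclideanSpace ℝ (Fin 6)))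
      (𝓝[≠] 0) (𝓝 0) := by
  have hcont : Continuous
      (fun ε : ℝ ↦ (WithLp.toLp 2 ![0, 0, 0, ε, 0, 0] : EuclideanSpace ℝ (Fin 6))) := by
    fun_prop
  have hzero : (WithLp.toLp 2 ![0, 0, 0, 0, 0, 0] : EuclideanSpace ℝ (Fin 6)) = 0 := by
    ext i; fin_cases i <;> rfl
  simpa only [hzero] using (hcont.tendsto 0).mono_left nhdsWithin_le_nhds

/-- The slider does not satisfy the Brockett condition: for any ball `B` of
radius `< π/2` around the origin, `(0,0,0,ε,0,0) ∉ f(B × ℝ²)` for every `ε ≠ 0`,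
hence `f(B × ℝ²)` is not a neighborhood of `0`. -/
theorem stmt17 (ε ρ : ℝ) (hε : ε ≠ 0) (hρ : ρ < Real.pi / 2) :
    (WithLp.toLp 2 ![0, 0, 0, ε, 0, 0] : EuclideanSpace ℝ (Fin 6)) ∉
      fSli '' (Metric.ball (0 : EuclideanSpace ℝ (Fin 6)) ρ ×ˢ (Set.univ : Set (ℝ × ℝ))) ∧
    fSli '' (Metric.ball (0 : EuclideanSpace ℝ (Fin 6)) ρ ×ˢ (Set.univ : Set (ℝ × ℝ))) ∉
      nhds (0 : EuclideanSpace ℝ (Fin 6)) := by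
  refine ⟨toLp_notMem_fSli_image_ball hε hρ.le, fun hnhds ↦ ?_⟩
  obtain ⟨δ, hδ, hδ0⟩ :=
    ((tendsto_toLp_nhdsNE_zero.eventually hnhds).and self_mem_nhdsWithin).exists
  exact toLp_notMem_fSli_image_ball hδ0 hρ.le hδ
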